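/- arXiv:2508.19215 — 2 statements merged into one kernel-verified Lean document; each statement's English description precedes it below -/
import Mathlib

section
/- Let (V, {H p}_{p∈ℤ}, Q) be a simple polarized pure ℚ-Hodge structure of weight w (all data and laws spelled out as in the context) which is CY with Hodge line H m (m the largest index with H m ≠ 0 and dim_ℂ H m = 1). Let γ be a Hodge automorphism of V whose complexification acts on H m by a scalar α ∈ ℂ with |α| = 1, and assume there is a finitely generated ℤ-submodule Λ ⊆ V spanning V over ℚ with γ(Λ) = Λ. Then γ is of finite order. -/
open TensorProduct ComplexConjugate DirectSum Module
open LinearMap (BilinForm)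

/-!
The form `Q (γ ·) (γ ·)` is again orthogonal for the Hodge decomposition, so the endomorphism `φ`
with `Q (φ x) y = Q (γ x) (γ y)` is an endomorphism of the Hodge structure. It fixes the Hodge line
because `|α| = 1`, so `ker (φ - 1)` is a nonzero Hodge substructure and simplicity forces `φ = 1`:
`γ` preserves `Q`. Then `γ` preserves the positive definite Hodge form
`h u v = ∑ p, i ^ (2p - w) Q (u_p, conj v_p)`, so every linear functional is bounded on the
`γ`-orbits. As `γ` preserves `Λ`, the orbit of a lattice vector consists of lattice points with
bounded coordinates, hence is finite, and an automorphism with finite orbits on a finite spanning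
set has finite order.
-/

theorem LinearMap.ker_baseChange {R A M N : Type*} [CommRing R] [CommRing A] [Algebra R A]
    [Module.Flat R A] [AddCommGroup M] [Module R M] [AddCommGroup N] [Module R N]
    (f : M →ₗ[R] N) : ker (f.baseChange A) = (ker f).baseChange A := by
  ext x
  exact Module.Flat.lTensor_exact A f.exact_subtype_ker_map x

namespace LinearMap.BilinForm

variable {R A M : Type*} [CommRing R] [CommRing A] [Algebra R A] [AddCommGroup M] [Module R M]

theorem eq_baseChange (Q : BilinForm R M) {B : BilinForm A (A ⊗[R] M)}
    (h : ∀ x y, B (1 ⊗ₜ x) (1 ⊗ₜ y) = algebraMap R A (Q x y)) : B = Q.baseChange A := by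
  ext x y
  simp [h, Algebra.algebraMap_eq_smul_one]

theorem baseChange_compl₁₂ (Q : BilinForm R M) (f g : M →ₗ[R] M) :
    BilinForm.baseChange A (Q.compl₁₂ f g) =
      (Q.baseChange A).compl₁₂ (f.baseChange A) (g.baseChange A) := by
  ext x y
  simp

theorem baseChange_swap {Q : BilinForm R M} {ε : R} (h : ∀ x y, Q y x = ε * Q x y)
    (u v : A ⊗[R] M) : Q.baseChange A v u = algebraMap R A ε * Q.baseChange A u v := by
  have : (Q.baseChange A).flip = algebraMap R A ε • Q.baseChange A := by
    ext x y
    simp [Algebra.smul_def]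
    rw [h, map_mul]
  exact LinearMap.congr_fun₂ this u v

end LinearMap.BilinForm

theorem InnerProductSpace.Core.exists_norm_sq_le {𝕜 E : Type*} [RCLike 𝕜] [AddCommGroup E]
    [Module 𝕜 E] [FiniteDimensional 𝕜 E] (cd : InnerProductSpace.Core 𝕜 E) (f : E →ₗ[𝕜] 𝕜) :
    ∃ K : ℝ, ∀ x, ‖f x‖ ^ 2 ≤ K * RCLike.re (cd.inner x x) := by
  let _ : NormedAddCommGroup E := cd.toNormedAddCommGroup
  let _ : InnerProductSpace 𝕜 E := InnerProductSpace.ofCore cd.toCore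
  refine ⟨‖LinearMap.toContinuousLinearMap f‖ ^ 2, fun x => ?_⟩
  rw [← InnerProductSpace.norm_sq_eq_re_inner (𝕜 := 𝕜) x, ← mul_pow]
  exact pow_le_pow_left₀ (norm_nonneg _) ((LinearMap.toContinuousLinearMap f).le_opNorm x) 2

namespace DirectSum

variable {ι R M : Type*} [DecidableEq ι] [Semiring R] [AddCommMonoid M] [Module R M]
  {ℳ : ι → Submodule R M} [Decomposition ℳ]

theorem decompose_map_of_mapsTo {f : M →ₗ[R] M} (hf : ∀ i, ∀ x ∈ ℳ i, f x ∈ ℳ i) (x : M)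
    (i : ι) : (decompose ℳ (f x) i : M) = f (decompose ℳ x i) := by
  induction x using DirectSum.Decomposition.inductionOn ℳ with
  | zero => simp
  | @homogeneous j m =>
    by_cases hji : j = i
    · subst hji
      rw [decompose_of_mem_same ℳ (hf j m m.2), decompose_of_mem_same ℳ m.2]
    · rw [decompose_of_mem_ne ℳ (hf j m m.2) hji, decompose_of_mem_ne ℳ m.2 hji, map_zero]
  | add x y hx hy => simp [hx, hy]

theorem mem_of_decompose_eq_zero {x : M} {i : ι} (h : ∀ j ≠ i, (decompose ℳ x j : M) = 0) :
    x ∈ ℳ i := by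
  classical
  rw [← sum_support_decompose ℳ x]
  refine Submodule.sum_mem _ fun j _ => ?_
  by_cases hji : j = i
  · exact hji ▸ (decompose ℳ x j).2
  · rw [h j hji]
    exact zero_mem _

variable (ℳ) in
theorem eq_zero_of_decompose_eq_zero {x : M} (h : ∀ i, (decompose ℳ x i : M) = 0) : x = 0 := by
  classical
  rw [← sum_support_decompose ℳ x]
  exact Finset.sum_eq_zero fun i _ => h i

theorem ker_eq_iSup_inf_of_mapsTo {f : M →ₗ[R] M} (hf : ∀ i, ∀ x ∈ ℳ i, f x ∈ ℳ i) :
    LinearMap.ker f = ⨆ i, LinearMap.ker f ⊓ ℳ i := by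
  classical
  refine le_antisymm (fun x hx => ?_) (iSup_le fun _ => inf_le_left)
  rw [← sum_support_decompose ℳ x]
  refine Submodule.sum_mem _ fun i _ => Submodule.mem_iSup_of_mem i ⟨?_, (decompose ℳ x i).2⟩
  rw [SetLike.mem_coe, LinearMap.mem_ker, ← decompose_map_of_mapsTo hf, LinearMap.mem_ker.mp hx,
    decompose_zero, zero_apply, ZeroMemClass.coe_zero]

end DirectSum

section HodgeForm

open Complex

variable {M : Type*} [AddCommGroup M] [Module ℂ M]

structure IsPolarization (H : ℤ → Submodule ℂ M) (w : ℤ) (c : M →ₗ⋆[ℂ] M)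
    (B : BilinForm ℂ M) : Prop where
  conj_mem : ∀ p, ∀ u ∈ H p, c u ∈ H (w - p)
  orthogonal : ∀ p p', p + p' ≠ w → ∀ u ∈ H p, ∀ u' ∈ H p', B u u' = 0
  pos : ∀ p, ∀ v ∈ H p, v ≠ 0 → ∃ r : ℝ, 0 < r ∧ I ^ (2 * p - w) * B v (c v) = r

variable {H : ℤ → Submodule ℂ M} {w : ℤ} {c : M →ₗ⋆[ℂ] M} {B : BilinForm ℂ M}

namespace IsPolarization

theorem apply_conj_ne_zero (hX : IsPolarization H w c B) {p : ℤ} {v : M} (hv : v ∈ H p)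
    (hv0 : v ≠ 0) : B v (c v) ≠ 0 := fun h => by
  obtain ⟨r, hr, hre⟩ := hX.pos p v hv hv0
  rw [h, mul_zero] at hre
  exact hr.ne' (by exact_mod_cast hre.symm)

theorem exists_eq_ofReal (hX : IsPolarization H w c B) {p : ℤ} {v : M} (hv : v ∈ H p) :
    ∃ r : ℝ, 0 ≤ r ∧ I ^ (2 * p - w) * B v (c v) = r ∧ (r = 0 → v = 0) := by
  rcases eq_or_ne v 0 with rfl | hv0
  · exact ⟨0, le_rfl, by simp, fun _ => rfl⟩
  obtain ⟨r, hr, hre⟩ := hX.pos p v hv hv0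
  exact ⟨r, hr.le, hre, fun h => absurd h hr.ne'⟩

theorem apply_eq_self_of_finrank_eq_one (hX : IsPolarization H w c B) {m : ℤ}
    (hm : finrank ℂ (H m) = 1) {φ Γ : M →ₗ[ℂ] M} (hφm : ∀ u ∈ H m, φ u ∈ H m)
    (hφ : ∀ u v, B (φ u) v = B (Γ u) (Γ v)) {α : ℂ} (hα : ‖α‖ = 1) {u : M} (hu : u ∈ H m)
    (hΓu : Γ u = α • u) (hΓcu : Γ (c u) = conj α • c u) : φ u = u := by
  rcases eq_or_ne u 0 with rfl | hu0
  · exact map_zero φ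
  obtain ⟨t, ht⟩ := (finrank_eq_one_iff_of_nonzero' (⟨u, hu⟩ : H m) (by simpa using hu0)).mp hm
    ⟨φ u, hφm u hu⟩
  have ht' : φ u = t • u := (congrArg Subtype.val ht).symm
  have hαα : α * conj α = 1 := by
    rw [mul_conj, normSq_eq_norm_sq, hα]
    norm_num
  have ht1 : t * B u (c u) = B u (c u) := calc
    t * B u (c u) = B (φ u) (c u) := by rw [ht', map_smul, LinearMap.smul_apply, smul_eq_mul]
    _ = α * conj α * B u (c u) := by
      rw [hφ, hΓu, hΓcu, map_smul, map_smul, LinearMap.smul_apply, smul_eq_mul, smul_eq_mul]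
      ring
    _ = B u (c u) := by rw [hαα, one_mul]
  rw [ht', (mul_left_eq_self₀.mp ht1).resolve_right (hX.apply_conj_ne_zero hu hu0), one_smul]

end IsPolarization

variable (H) [Decomposition H] (w c B)

/-- This is the Hodge form only when `P` contains every `p` with `H p ≠ ⊥`. -/
noncomputable def hodgeForm (P : Finset ℤ) (u v : M) : ℂ :=
  ∑ p ∈ P, I ^ (2 * p - w) * B (decompose H u p) (c (decompose H v p))

variable {H w c B}

namespace IsPolarization

theorem apply_conj_eq_apply_decompose (hX : IsPolarization H w c B) {q : ℤ} {y : M}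
    (hy : y ∈ H q) (x : M) : B x (c y) = B (decompose H x q) (c y) := by
  classical
  conv_lhs => rw [← sum_support_decompose H x]
  rw [map_sum, LinearMap.sum_apply]
  refine Finset.sum_eq_single q (fun p _ hpq => hX.orthogonal p (w - q) (by omega) _
    (decompose H x p).2 _ (hX.conj_mem q y hy)) fun hq => ?_
  rw [DFinsupp.notMem_support_iff.mp hq, ZeroMemClass.coe_zero, map_zero, LinearMap.zero_apply]

theorem decompose_eq_zero (hX : IsPolarization H w c B) {x : M} {q : ℤ}
    (h : ∀ y ∈ H q, B x (c y) = 0) : (decompose H x q : M) = 0 := by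
  by_contra hne
  refine hX.apply_conj_ne_zero (decompose H x q).2 hne ?_
  rw [← hX.apply_conj_eq_apply_decompose (decompose H x q).2, h _ (decompose H x q).2]

theorem eq_zero_of_forall_apply_conj (hX : IsPolarization H w c B) {x : M}
    (h : ∀ y, B x (c y) = 0) : x = 0 :=
  eq_zero_of_decompose_eq_zero H fun _ => hX.decompose_eq_zero fun y _ => h y

theorem mapsTo_of_apply_eq_apply_map_map (hX : IsPolarization H w c B) {φ Γ : M →ₗ[ℂ] M}
    (hΓ : ∀ p, ∀ u ∈ H p, Γ u ∈ H p) (hφ : ∀ u v, B (φ u) v = B (Γ u) (Γ v)) {p : ℤ} {u : M}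
    (hu : u ∈ H p) : φ u ∈ H p :=
  mem_of_decompose_eq_zero fun q hqp => hX.decompose_eq_zero fun y hy => by
    rw [hφ]
    exact hX.orthogonal p (w - q) (by omega) _ (hΓ p u hu) _ (hΓ _ _ (hX.conj_mem q y hy))

theorem re_hodgeForm_self_nonneg (hX : IsPolarization H w c B) (P : Finset ℤ) (u : M) :
    0 ≤ (hodgeForm H w c B P u u).re := by
  rw [hodgeForm, re_sum]
  refine Finset.sum_nonneg fun p _ => ?_
  obtain ⟨r, hr, hre, -⟩ := hX.exists_eq_ofReal (decompose H u p).2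
  rw [hre, ofReal_re]
  exact hr

theorem eq_zero_of_hodgeForm_self_eq_zero (hX : IsPolarization H w c B) {P : Finset ℤ}
    (hP : ∀ p ∉ P, H p = ⊥) {u : M} (h : hodgeForm H w c B P u u = 0) : u = 0 := by
  choose r hr hre hr0 using fun p => hX.exists_eq_ofReal (decompose H u p).2
  have hsum : ∑ p ∈ P, r p = 0 := by
    rw [hodgeForm, Finset.sum_congr rfl fun p _ => hre p] at h
    exact_mod_cast h
  refine eq_zero_of_decompose_eq_zero H fun p => ?_
  by_cases hp : p ∈ P
  · exact hr0 p ((Finset.sum_eq_zero_iff_of_nonneg fun q _ => hr q).mp hsum p hp)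
  · simpa [hP p hp] using (decompose H u p).2

end IsPolarization

theorem Complex.conj_I_zpow_two_mul_sub (p w : ℤ) :
    conj (I ^ (2 * p - w)) = I ^ (2 * p - w) * (-1) ^ w := by
  rw [map_zpow₀, conj_I, neg_eq_neg_one_mul, mul_zpow, mul_comm]
  congr 1
  rw [zpow_sub₀ (by norm_num), zpow_mul]
  norm_num
  rw [← inv_zpow, inv_neg, inv_one]

theorem conj_hodgeForm (hcc : ∀ u, c (c u) = u) (hBc : ∀ u v, B (c u) (c v) = conj (B u v))
    (hBsymm : ∀ u v, B v u = (-1) ^ w * B u v) (P : Finset ℤ) (u v : M) :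
    conj (hodgeForm H w c B P u v) = hodgeForm H w c B P v u := by
  rw [hodgeForm, hodgeForm, map_sum]
  refine Finset.sum_congr rfl fun p _ => ?_
  rw [map_mul, ← hBc, hcc, hBsymm (c _), Complex.conj_I_zpow_two_mul_sub, mul_assoc]

theorem hodgeForm_add_right (P : Finset ℤ) (u v v' : M) :
    hodgeForm H w c B P u (v + v') = hodgeForm H w c B P u v + hodgeForm H w c B P u v' := by
  simp only [hodgeForm, decompose_add, DirectSum.add_apply, Submodule.coe_add, map_add, mul_add,
    Finset.sum_add_distrib]

theorem hodgeForm_smul_right (P : Finset ℤ) (u : M) (z : ℂ) (v : M) :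
    hodgeForm H w c B P u (z • v) = conj z * hodgeForm H w c B P u v := by
  simp only [hodgeForm, decompose_smul, DirectSum.smul_apply, Submodule.coe_smul, map_smulₛₗ,
    RingHom.id_apply, smul_eq_mul, Finset.mul_sum]
  refine Finset.sum_congr rfl fun p _ => by ring

theorem hodgeForm_map {Γ : M →ₗ[ℂ] M} (hΓH : ∀ p, ∀ u ∈ H p, Γ u ∈ H p)
    (hΓc : ∀ u, Γ (c u) = c (Γ u)) (hΓB : ∀ u v, B (Γ u) (Γ v) = B u v) (P : Finset ℤ)
    (u v : M) : hodgeForm H w c B P (Γ u) (Γ v) = hodgeForm H w c B P u v := by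
  simp only [hodgeForm, decompose_map_of_mapsTo hΓH, ← hΓc, hΓB]

theorem IsPolarization.exists_norm_sq_le_hodgeForm [FiniteDimensional ℂ M]
    (hX : IsPolarization H w c B) {P : Finset ℤ} (hP : ∀ p ∉ P, H p = ⊥)
    (hcc : ∀ u, c (c u) = u) (hBc : ∀ u v, B (c u) (c v) = conj (B u v))
    (hBsymm : ∀ u v, B v u = (-1) ^ w * B u v) (f : M →ₗ[ℂ] ℂ) :
    ∃ K : ℝ, ∀ u, ‖f u‖ ^ 2 ≤ K * (hodgeForm H w c B P u u).re :=
  InnerProductSpace.Core.exists_norm_sq_le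
    { inner := fun u v => hodgeForm H w c B P v u
      conj_inner_symm := conj_hodgeForm hcc hBc hBsymm P
      re_inner_nonneg := hX.re_hodgeForm_self_nonneg P
      add_left := fun u u' v => hodgeForm_add_right P v u u'
      smul_left := fun u v z => hodgeForm_smul_right P v z u
      definite := fun _ => hX.eq_zero_of_hodgeForm_self_eq_zero hP } f

end HodgeForm

section RationalStructure

variable {V W : Type*} [AddCommGroup V] [Module ℚ V] [AddCommGroup W] [Module ℚ W]

variable (V) in
noncomputable def complexConj : ℂ ⊗[ℚ] V →ₗ⋆[ℂ] ℂ ⊗[ℚ] V where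
  toFun := (Complex.conjAe.toLinearMap.restrictScalars ℚ).rTensor V
  map_add' := map_add _
  map_smul' z u := by
    induction u using TensorProduct.induction_on with
    | zero => simp
    | tmul a x => simp [smul_tmul']
    | add u v hu hv => simp_all

@[simp]
theorem complexConj_tmul (z : ℂ) (x : V) : complexConj V (z ⊗ₜ x) = conj z ⊗ₜ x := rfl

theorem complexConj_complexConj (u : ℂ ⊗[ℚ] V) : complexConj V (complexConj V u) = u := by
  induction u using TensorProduct.induction_on with
  | zero => simp
  | tmul z x => simp
  | add u v hu hv => simp [hu, hv]

theorem LinearMap.baseChange_complexConj (f : V →ₗ[ℚ] W) (u : ℂ ⊗[ℚ] V) :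
    f.baseChange ℂ (complexConj V u) = complexConj W (f.baseChange ℂ u) := by
  induction u using TensorProduct.induction_on with
  | zero => simp
  | tmul z x => simp
  | add u v hu hv => simp [hu, hv]

theorem LinearMap.BilinForm.baseChange_complexConj (Q : BilinForm ℚ V) (u v : ℂ ⊗[ℚ] V) :
    Q.baseChange ℂ (complexConj V u) (complexConj V v) = conj (Q.baseChange ℂ u v) := by
  induction u using TensorProduct.induction_on with
  | zero => simp
  | add u u' hu hu' => simp [hu, hu']
  | tmul z x =>
    induction v using TensorProduct.induction_on with
    | zero => simp
    | add v v' hv hv' => rw [map_add, map_add, map_add, hv, hv', map_add]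
    | tmul z' y => simp [Rat.smul_def]

variable {H : ℤ → Submodule ℂ (ℂ ⊗[ℚ] V)} {w : ℤ} {Q : BilinForm ℚ V}

theorem IsPolarization.nondegenerate {c : ℂ ⊗[ℚ] V →ₗ⋆[ℂ] ℂ ⊗[ℚ] V} [Decomposition H]
    (hX : IsPolarization H w c (Q.baseChange ℂ)) (hQ : Q.IsRefl) : Q.Nondegenerate := by
  refine hQ.nondegenerate_iff_separatingLeft.mpr fun x hx => ?_
  have h0 : Q.baseChange ℂ (1 ⊗ₜ x) = 0 := by
    ext y
    simp [hx]
  have h1 : TensorProduct.mk ℚ ℂ V 1 x = 0 :=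
    hX.eq_zero_of_forall_apply_conj fun y => by
      rw [TensorProduct.mk_apply, h0, LinearMap.zero_apply]
  exact (map_eq_zero_iff _ (Module.Flat.tensorProduct_mk_injective ℚ V ℂ)).mp h1

theorem LinearMap.eq_id_of_isSimple [Decomposition H]
    (hsimple : ∀ N : Submodule ℚ V,
      N.baseChange ℂ = ⨆ p : ℤ, N.baseChange ℂ ⊓ H p → N = ⊥ ∨ N = ⊤)
    {φ : V →ₗ[ℚ] V} (hφH : ∀ p, ∀ u ∈ H p, φ.baseChange ℂ u ∈ H p) {u : ℂ ⊗[ℚ] V} (hu : u ≠ 0)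
    (hφu : φ.baseChange ℂ u = u) : φ = LinearMap.id := by
  have hker : (ker (φ - id)).baseChange ℂ = ker (φ.baseChange ℂ - id) := by
    rw [← ker_baseChange, baseChange_sub, baseChange_id]
  rcases hsimple _ (hker ▸ ker_eq_iSup_inf_of_mapsTo fun p v hv => sub_mem (hφH p v hv) hv)
    with hbot | htop
  · have : u ∈ (ker (φ - id)).baseChange ℂ := by simp [hker, hφu]
    rw [hbot, Submodule.baseChange_bot] at this
    exact absurd this hu
  · ext x
    simpa [sub_eq_zero] using (htop ▸ Submodule.mem_top : x ∈ ker (φ - id))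

theorem IsPolarization.apply_map_map_of_isSimple [FiniteDimensional ℚ V] [Decomposition H]
    (hX : IsPolarization H w (complexConj V) (Q.baseChange ℂ))
    (hQsymm : ∀ x y, Q y x = (-1 : ℚ) ^ w * Q x y)
    (hsimple : ∀ N : Submodule ℚ V,
      N.baseChange ℂ = ⨆ p : ℤ, N.baseChange ℂ ⊓ H p → N = ⊥ ∨ N = ⊤)
    {m : ℤ} (hm : H m ≠ ⊥) (hmline : finrank ℂ (H m) = 1) {γ : V →ₗ[ℚ] V}
    (hγH : ∀ p, ∀ u ∈ H p, γ.baseChange ℂ u ∈ H p) {α : ℂ} (hα : ‖α‖ = 1)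
    (hγα : ∀ u ∈ H m, γ.baseChange ℂ u = α • u) (x y : V) : Q (γ x) (γ y) = Q x y := by
  have hQnd := hX.nondegenerate fun x y h => by rw [hQsymm, h, mul_zero]
  set φ := Q.leftAdjointOfNondegenerate hQnd γ ∘ₗ γ
  have hφ : Q.compl₁₂ φ LinearMap.id = Q.compl₁₂ γ γ := by
    ext x y
    exact Q.isAdjointPairLeftAdjointOfNondegenerate hQnd γ (γ x) y
  have hφC : ∀ u v, Q.baseChange ℂ (φ.baseChange ℂ u) v =
      Q.baseChange ℂ (γ.baseChange ℂ u) (γ.baseChange ℂ v) := by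
    have := congrArg (BilinForm.baseChange ℂ) hφ
    rw [BilinForm.baseChange_compl₁₂, BilinForm.baseChange_compl₁₂, LinearMap.baseChange_id] at this
    exact LinearMap.congr_fun₂ this
  have hφH : ∀ p, ∀ u ∈ H p, φ.baseChange ℂ u ∈ H p := fun p u hu =>
    hX.mapsTo_of_apply_eq_apply_map_map hγH hφC hu
  obtain ⟨u₀, hu₀, hu₀0⟩ := (Submodule.ne_bot_iff _).mp hm
  have hφu₀ : φ.baseChange ℂ u₀ = u₀ :=
    hX.apply_eq_self_of_finrank_eq_one hmline (hφH m) hφC hα hu₀ (hγα u₀ hu₀) (by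
      rw [LinearMap.baseChange_complexConj, hγα u₀ hu₀, map_smulₛₗ])
  have hφ1 := LinearMap.eq_id_of_isSimple hsimple hφH hu₀0 hφu₀
  simpa [hφ1] using (LinearMap.congr_fun₂ hφ x y).symm

theorem IsPolarization.exists_abs_apply_pow_le [FiniteDimensional ℚ V] [Decomposition H]
    {P : Finset ℤ} (hX : IsPolarization H w (complexConj V) (Q.baseChange ℂ))
    (hP : ∀ p ∉ P, H p = ⊥) (hQsymm : ∀ x y, Q y x = (-1 : ℚ) ^ w * Q x y) {γ : V →ₗ[ℚ] V}
    (hγH : ∀ p, ∀ u ∈ H p, γ.baseChange ℂ u ∈ H p) (hγQ : ∀ x y, Q (γ x) (γ y) = Q x y)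
    (f : Module.Dual ℚ V) (x : V) : ∃ K : ℝ, ∀ n : ℕ, |(f ((γ ^ n) x) : ℝ)| ≤ K := by
  have hBsymm : ∀ u v, Q.baseChange ℂ v u = (-1) ^ w * Q.baseChange ℂ u v := fun u v => by
    simpa using BilinForm.baseChange_swap (A := ℂ) hQsymm u v
  obtain ⟨K, hK⟩ := hX.exists_norm_sq_le_hodgeForm hP complexConj_complexConj
    Q.baseChange_complexConj hBsymm (f.baseChange ℂ)
  have hΓQ : ∀ u v,
      Q.baseChange ℂ (γ.baseChange ℂ u) (γ.baseChange ℂ v) = Q.baseChange ℂ u v := by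
    have : BilinForm.baseChange ℂ (Q.compl₁₂ γ γ) = Q.baseChange ℂ := by
      congr 1
      ext x y
      exact hγQ x y
    rw [BilinForm.baseChange_compl₁₂] at this
    exact LinearMap.congr_fun₂ this
  have hinv : ∀ n u, hodgeForm H w (complexConj V) (Q.baseChange ℂ) P ((γ.baseChange ℂ ^ n) u)
      ((γ.baseChange ℂ ^ n) u) = hodgeForm H w (complexConj V) (Q.baseChange ℂ) P u u := by
    intro n
    induction n with
    | zero => simp
    | succ n ih =>
      intro u
      rw [pow_succ, Module.End.mul_apply, ih,
        hodgeForm_map hγH (LinearMap.baseChange_complexConj γ) hΓQ]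
  refine ⟨√(K * (hodgeForm H w (complexConj V) (Q.baseChange ℂ) P (1 ⊗ₜ x) (1 ⊗ₜ x)).re),
    fun n => Real.abs_le_sqrt ?_⟩
  have := hK ((γ.baseChange ℂ ^ n) (1 ⊗ₜ x))
  rwa [hinv, ← LinearMap.baseChange_pow, LinearMap.baseChange_tmul,
    Module.Dual.baseChange_apply_tmul, Rat.smul_one_eq_cast, Complex.norm_ratCast, sq_abs] at this

end RationalStructure

theorem LinearEquiv.isOfFinOrder_of_finite_orbits {R M : Type*} [Semiring R] [AddCommMonoid M]
    [Module R M] {s : Set M} (hs : s.Finite) (hspan : Submodule.span R s = ⊤) (γ : M ≃ₗ[R] M)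
    (h : ∀ x ∈ s, (Set.range fun n : ℕ => (γ ^ n) x).Finite) : IsOfFinOrder γ := by
  have _ := hs.to_subtype
  have hinj : Set.InjOn (fun (g : M ≃ₗ[R] M) (x : s) => g x) (Set.range fun n : ℕ => γ ^ n) :=
    fun g _ g' _ hgg' => LinearEquiv.toLinearMap_injective <|
      LinearMap.ext_on hspan fun x hx => congrFun hgg' ⟨x, hx⟩
  have hfin : (Set.range fun n : ℕ => γ ^ n).Finite := by
    refine Set.Finite.of_finite_image ?_ hinj
    refine (Set.Finite.pi (t := fun x : s => Set.range fun n : ℕ => (γ ^ n) (x : M))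
      fun x => h x x.2).subset ?_
    rintro _ ⟨_, ⟨n, rfl⟩, rfl⟩ x -
    exact ⟨n, rfl⟩
  by_contra hγ
  exact Set.infinite_range_of_injective (injective_pow_iff_not_isOfFinOrder.mpr hγ) hfin

theorem Submodule.IsLattice.finite_of_forall_abs_le {V : Type*} [AddCommGroup V] [Module ℚ V]
    (Λ : Submodule ℤ V) [Λ.IsLattice ℚ] {S : Set V} (hSΛ : S ⊆ Λ)
    (hS : ∀ f : Module.Dual ℚ V, ∃ K : ℝ, ∀ x ∈ S, |(f x : ℝ)| ≤ K) : S.Finite := by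
  let b := Module.Free.chooseBasis ℤ Λ
  let bQ := b.extendOfIsLattice ℚ
  choose K hK using fun i => hS (bQ.coord i)
  have hsum : ∀ y : Λ, ∑ i, b.repr y i • (b i : V) = y := fun y => by
    simpa only [Submodule.coe_sum, Submodule.coe_smul] using congrArg Subtype.val (b.sum_repr y)
  have hcoord : ∀ (y : Λ) i, bQ.coord i y = b.repr y i := by
    intro y i
    have hy : (y : V) = ∑ i, (b.repr y i : ℚ) • bQ i := by
      simp [bQ, ← hsum y, Int.cast_smul_eq_zsmul]
    rw [Module.Basis.coord_apply, hy, bQ.repr_sum_self]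
  refine ((Set.Finite.pi fun i => Set.finite_Icc (-⌈K i⌉) ⌈K i⌉).image
    fun k => ∑ i, k i • (b i : V)).subset ?_
  intro x hx
  lift x to Λ using hSΛ hx
  refine ⟨fun i => b.repr x i, fun i _ => ?_, hsum x⟩
  have hi := abs_le.mp (hK i x hx)
  rw [hcoord] at hi
  push_cast at hi
  constructor
  · have := Int.le_ceil (K i)
    exact_mod_cast (by linarith : (-⌈K i⌉ : ℝ) ≤ b.repr x i)
  · exact_mod_cast hi.2.trans (Int.le_ceil (K i))

theorem hodge_automorphism_is_torsion_general
    (V : Type*) [AddCommGroup V] [Module ℚ V] [FiniteDimensional ℚ V]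
    (w : ℤ)
    -- the Hodge decomposition of V_ℂ := ℂ ⊗[ℚ] V
    (H : ℤ → Submodule ℂ (ℂ ⊗[ℚ] V))
    (hHfin : {p : ℤ | H p ≠ ⊥}.Finite)
    (hHdirect : DirectSum.IsInternal H)
    -- the conjugation involution induced by complex conjugation on the first factor
    (c : (ℂ ⊗[ℚ] V) →ₗ[ℚ] (ℂ ⊗[ℚ] V))
    (hc : ∀ (z : ℂ) (v : V), c (z ⊗ₜ[ℚ] v) = (starRingEnd ℂ) z ⊗ₜ[ℚ] v)
    (hcH : ∀ p : ℤ, ((H p).restrictScalars ℚ).map c = (H (w - p)).restrictScalars ℚ)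
    -- the polarization form and its ℂ-bilinear extension
    (Q : V →ₗ[ℚ] V →ₗ[ℚ] ℚ)
    (hQsymm : ∀ x y : V, Q y x = (-1 : ℚ) ^ w * Q x y)
    (QC : (ℂ ⊗[ℚ] V) →ₗ[ℂ] (ℂ ⊗[ℚ] V) →ₗ[ℂ] ℂ)
    (hQC : ∀ x y : V, QC ((1 : ℂ) ⊗ₜ[ℚ] x) ((1 : ℂ) ⊗ₜ[ℚ] y) = (Q x y : ℂ))
    (hQorth : ∀ p p' : ℤ, p + p' ≠ w → ∀ u ∈ H p, ∀ u' ∈ H p', QC u u' = 0)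
    (hQpos : ∀ p : ℤ, ∀ v ∈ H p, v ≠ 0 →
      ∃ r : ℝ, 0 < r ∧ Complex.I ^ (2 * p - w) * QC v (c v) = (r : ℂ))
    -- simplicity: the only rational Hodge substructures are 0 and V
    (hsimple : ∀ N : Submodule ℚ V,
      N.baseChange ℂ = ⨆ p : ℤ, N.baseChange ℂ ⊓ H p → N = ⊥ ∨ N = ⊤)
    -- CY condition: m is the largest index with H m ≠ 0 and H m is a line
    (m : ℤ) (hm : H m ≠ ⊥)
    (hmline : Module.finrank ℂ (H m) = 1)
    -- a Hodge automorphism acting on the Hodge line by a scalar of norm one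
    (γ : V ≃ₗ[ℚ] V)
    (hγH : ∀ p : ℤ, ∀ x ∈ H p, (γ.toLinearMap.baseChange ℂ) x ∈ H p)
    (α : ℂ) (hα : ‖α‖ = 1)
    (hγα : ∀ x ∈ H m, (γ.toLinearMap.baseChange ℂ) x = α • x)
    -- a γ-stable full integral lattice
    (Λ : Submodule ℤ V) (hΛfg : Λ.FG)
    (hΛspan : Submodule.span ℚ (Λ : Set V) = ⊤)
    (hγΛ : ⇑γ '' (Λ : Set V) = (Λ : Set V)) :
    IsOfFinOrder γ := by
  let _ := hHdirect.chooseDecomposition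
  obtain rfl : QC = BilinForm.baseChange ℂ Q := BilinForm.eq_baseChange Q fun x y => hQC x y
  -- this makes `c` definitionally `complexConj V`
  obtain rfl : c = (Complex.conjAe.toLinearMap.restrictScalars ℚ).rTensor V :=
    TensorProduct.ext' fun z x => hc z x
  have hX : IsPolarization H w (complexConj V) (BilinForm.baseChange ℂ Q) :=
    ⟨fun p u hu => (hcH p).le ⟨u, hu, rfl⟩, hQorth, hQpos⟩
  have hP : ∀ p ∉ hHfin.toFinset, H p = ⊥ := fun p hp => by simpa using hp
  have hγQ := hX.apply_map_map_of_isSimple hQsymm hsimple hm hmline hγH hα hγα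
  have : Λ.IsLattice ℚ := ⟨hΛfg, hΛspan⟩
  obtain ⟨s, hs⟩ := hΛfg
  have hγΛ' : Set.MapsTo γ Λ Λ := fun x hx => hγΛ ▸ Set.mem_image_of_mem γ hx
  refine LinearEquiv.isOfFinOrder_of_finite_orbits s.finite_toSet ?_ γ fun x hx => ?_
  · rw [← Submodule.span_span_of_tower ℤ, hs, hΛspan]
  refine Submodule.IsLattice.finite_of_forall_abs_le Λ ?_ fun f => ?_
  · rintro _ ⟨n, rfl⟩
    simp only [LinearEquiv.coe_pow]
    exact hγΛ'.iterate n (hs ▸ Submodule.subset_span hx)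
  obtain ⟨K, hK⟩ := hX.exists_abs_apply_pow_le hP hQsymm hγH hγQ f x
  exact ⟨K, by rintro _ ⟨n, rfl⟩; simpa [LinearEquiv.coe_pow, Module.End.coe_pow] using hK n⟩

/-- The torsion conclusion of the Claim inside the proof of Lemma 2.17: a Hodge
automorphism of a simple polarized pure ℚ-Hodge structure of CY type which acts on the
Hodge line by a scalar of norm one and preserves a full integral lattice has finite
order. -/
theorem hodge_automorphism_is_torsion
    (V : Type*) [AddCommGroup V] [Module ℚ V] [FiniteDimensional ℚ V]
    (w : ℤ)
    -- the Hodge decomposition of V_ℂ := ℂ ⊗[ℚ] V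
    (H : ℤ → Submodule ℂ (ℂ ⊗[ℚ] V))
    (hHfin : {p : ℤ | H p ≠ ⊥}.Finite)
    (hHdirect : DirectSum.IsInternal H)
    -- the conjugation involution induced by complex conjugation on the first factor
    (c : (ℂ ⊗[ℚ] V) →ₗ[ℚ] (ℂ ⊗[ℚ] V))
    (hc : ∀ (z : ℂ) (v : V), c (z ⊗ₜ[ℚ] v) = (starRingEnd ℂ) z ⊗ₜ[ℚ] v)
    (hcH : ∀ p : ℤ, ((H p).restrictScalars ℚ).map c = (H (w - p)).restrictScalars ℚ)
    -- the polarization form and its ℂ-bilinear extension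
    (Q : V →ₗ[ℚ] V →ₗ[ℚ] ℚ)
    (hQsymm : ∀ x y : V, Q y x = (-1 : ℚ) ^ w * Q x y)
    (QC : (ℂ ⊗[ℚ] V) →ₗ[ℂ] (ℂ ⊗[ℚ] V) →ₗ[ℂ] ℂ)
    (hQC : ∀ x y : V, QC ((1 : ℂ) ⊗ₜ[ℚ] x) ((1 : ℂ) ⊗ₜ[ℚ] y) = (Q x y : ℂ))
    (hQorth : ∀ p p' : ℤ, p + p' ≠ w → ∀ u ∈ H p, ∀ u' ∈ H p', QC u u' = 0)
    (hQpos : ∀ p : ℤ, ∀ v ∈ H p, v ≠ 0 →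
      ∃ r : ℝ, 0 < r ∧ Complex.I ^ (2 * p - w) * QC v (c v) = (r : ℂ))
    -- simplicity: the only rational Hodge substructures are 0 and V
    (hsimple : ∀ N : Submodule ℚ V,
      N.baseChange ℂ = ⨆ p : ℤ, N.baseChange ℂ ⊓ H p → N = ⊥ ∨ N = ⊤)
    -- CY condition: m is the largest index with H m ≠ 0 and H m is a line
    (m : ℤ) (hm : H m ≠ ⊥) (hmtop : ∀ p : ℤ, m < p → H p = ⊥)
    (hmline : Module.finrank ℂ (H m) = 1)
    -- a Hodge automorphism acting on the Hodge line by a scalar of norm one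
    (γ : V ≃ₗ[ℚ] V)
    (hγH : ∀ p : ℤ, ∀ x ∈ H p, (γ.toLinearMap.baseChange ℂ) x ∈ H p)
    (α : ℂ) (hα : ‖α‖ = 1)
    (hγα : ∀ x ∈ H m, (γ.toLinearMap.baseChange ℂ) x = α • x)
    -- a γ-stable full integral lattice
    (Λ : Submodule ℤ V) (hΛfg : Λ.FG)
    (hΛspan : Submodule.span ℚ (Λ : Set V) = ⊤)
    (hγΛ : ⇑γ '' (Λ : Set V) = (Λ : Set V)) :
    IsOfFinOrder γ :=
  hodge_automorphism_is_torsion_general V w H hHfin hHdirect c hc hcH Q hQsymm QC hQC hQorth hQpos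
    hsimple m hm hmline γ hγH α hα hγα Λ hΛfg hΛspan hγΛ
end

section
/- Let S be a set and R a reflexive and symmetric binary relation on S. Define the composed relation R⁺ by: R⁺ x y holds iff there exists z ∈ S with R x z and R z y, and recursively set R_0 := R and R_{j+1} := (R_j)⁺. For each j ∈ ℕ, let U_j := {x ∈ S : ∀ y ∈ S, R_{j+1} x y → R_j x y} be the maximal subset of S whose R_j-related classes are stable. Then the sets U_j form an increasing sequence: U_j ⊆ U_{j+1} for every j ∈ ℕ. -/
/-- The composed relation `R⁺`: `x ∼ y` iff `x ∼ z ∼ y` for some `z`. -/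
def relPlus {S : Type*} (R : S → S → Prop) : S → S → Prop :=
  fun x y => ∃ z, R x z ∧ R z y

/-- The iterates `R_0 = R`, `R_{j+1} = (R_j)⁺`. -/
def relIter {S : Type*} (R : S → S → Prop) : ℕ → S → S → Prop
  | 0 => R
  | j + 1 => relPlus (relIter R j)

/-- Set-theoretic content of §3.1: the maximal subsets `U_j` of points whose
`R_j`-related classes are stable form an increasing sequence: `U_j ⊆ U_{j+1}`. -/
theorem stable_loci_increasing
    {S : Type*} (R : S → S → Prop)
    (hrefl : ∀ x, R x x) (hsymm : ∀ x y, R x y → R y x) :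
    ∀ j : ℕ,
      {x : S | ∀ y, relIter R (j + 1) x y → relIter R j x y} ⊆
        {x : S | ∀ y, relIter R (j + 2) x y → relIter R (j + 1) x y} := by
  intro j x hx y hy
  obtain ⟨z, hxz, w, hzw, hwy⟩ := hy
  have hxz' : relIter R j x z := hx z hxz
  have hxw : relIter R j x w := hx w ⟨z, hxz', hzw⟩
  exact ⟨w, hxw, hwy⟩
end
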